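/- arXiv:0803.3321 — 2 statements merged into one kernel-verified Lean document; each statement's English description precedes it below -/
import Mathlib

section
/- Let r > 0, c = (1/r)(1 + 1/r), and let ω be the ℝ³-valued 1-form on the sphere of radius r defined by ω_x(v) = −c (x × v) for v tangent to the sphere at x. Then for tangent vectors u, v at x, (dω + (1/2)[ω,ω])(u,v) = (1 − 1/r²)(u × v), where [ω,ω](u,v) = 2 ω(u) × ω(v). -/
/-!
Since `ω_y(v) = -c (y × v)` is linear in `y`, its exterior derivative on constant fields is
`dω(u, v) = -c (u × v) + c (v × u) = -2c (u × v)`. The bracket term is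
`c² (x × u) × (x × v) = c² (x ⬝ (u × v)) x`, and for `u, v` tangent at `x` the vector `u × v`
is normal to the sphere, so this equals `c² r² (u × v)`. Finally `c² r² - 2c = 1 - 1/r²`.
-/

open Matrix

section CrossProduct

variable {R : Type*} [CommRing R]

theorem smul_cross_smul (s t : R) (a b : Fin 3 → R) :
    (s • a) ⨯₃ (t • b) = (s * t) • (a ⨯₃ b) := by
  rw [map_smul, map_smul, LinearMap.smul_apply, smul_smul, mul_comm]

theorem cross_cross_cross_left (a b c : Fin 3 → R) :
    a ⨯₃ b ⨯₃ (a ⨯₃ c) = (a ⬝ᵥ b ⨯₃ c) • a := by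
  rw [cross_cross_eq_smul_sub_smul, dot_self_cross, zero_smul, zero_sub,
    triple_product_permutation, ← cross_anticomm b c, dotProduct_neg, neg_smul, neg_neg]

theorem dotProduct_self_smul_cross_of_dotProduct_eq_zero {a b c : Fin 3 → R}
    (hb : a ⬝ᵥ b = 0) (hc : a ⬝ᵥ c = 0) :
    (a ⬝ᵥ a) • (b ⨯₃ c) = (a ⬝ᵥ b ⨯₃ c) • a := by
  have h_parallel : a ⨯₃ (b ⨯₃ c) = 0 := by
    rw [cross_cross_eq_smul_sub_smul', hc, dotProduct_comm, hb, zero_smul, zero_smul, sub_zero]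
  have h := cross_cross_eq_smul_sub_smul' a a (b ⨯₃ c)
  rw [h_parallel, map_zero, eq_comm, sub_eq_zero] at h
  exact h.symm

theorem cross_cross_cross_of_dotProduct_eq_zero {a b c : Fin 3 → R}
    (hb : a ⬝ᵥ b = 0) (hc : a ⬝ᵥ c = 0) :
    a ⨯₃ b ⨯₃ (a ⨯₃ c) = (a ⬝ᵥ a) • (b ⨯₃ c) := by
  rw [cross_cross_cross_left, dotProduct_self_smul_cross_of_dotProduct_eq_zero hb hc]

end CrossProduct

section Derivative

variable {𝕜 : Type*} [NontriviallyNormedField 𝕜] [CompleteSpace 𝕜]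

theorem hasFDerivAt_cross_const (w x : Fin 3 → 𝕜) :
    HasFDerivAt (fun y => y ⨯₃ w) (LinearMap.toContinuousLinearMap (crossProduct.flip w)) x :=
  (LinearMap.toContinuousLinearMap (crossProduct.flip w)).hasFDerivAt

theorem fderiv_const_smul_cross_const_apply (c : 𝕜) (w x u : Fin 3 → 𝕜) :
    fderiv 𝕜 (fun y => c • (y ⨯₃ w)) x u = c • (u ⨯₃ w) := by
  have h : HasFDerivAt (fun y => c • (y ⨯₃ w))
      (c • LinearMap.toContinuousLinearMap (crossProduct.flip w)) x :=
    (hasFDerivAt_cross_const w x).const_smul c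
  rw [h.fderiv]
  rfl

end Derivative

/-- For a sphere of radius `r`, `c = (1/r)(1 + 1/r)`, and the `ℝ³`-valued
1-form `ω_x(v) = −c (x × v)` (extended to all of `ℝ³` by the same formula),
the local curvature form `dω + (1/2)[ω,ω]`, with
`[ω,ω](u,v) = 2 ω(u) × ω(v)` and `dω(u,v)` computed on constant vector
fields via Fréchet derivatives, equals `(1 − 1/r²)(u × v)` on tangent
vectors `u, v` at a point `x` of the sphere. -/
theorem curvature_rolling_sphere_on_sphere (r : ℝ) (hr : 0 < r)
    (c : ℝ) (hc : c = (1 / r) * (1 + 1 / r))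
    (ω : (Fin 3 → ℝ) → (Fin 3 → ℝ) → (Fin 3 → ℝ))
    (hω : ∀ x v, ω x v = -(c • (x ⨯₃ v)))
    (x u v : Fin 3 → ℝ) (hx : x ⬝ᵥ x = r ^ 2) (hu : x ⬝ᵥ u = 0) (hv : x ⬝ᵥ v = 0) :
    (fderiv ℝ (fun y => ω y v) x u - fderiv ℝ (fun y => ω y u) x v)
        + (1 / 2 : ℝ) • ((2 : ℝ) • (ω x u ⨯₃ ω x v))
      = (1 - 1 / r ^ 2) • (u ⨯₃ v) := by
  simp_rw [hω, ← neg_smul]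
  have hdω : fderiv ℝ (fun y => (-c) • (y ⨯₃ v)) x u - fderiv ℝ (fun y => (-c) • (y ⨯₃ u)) x v
      = (-2 * c) • (u ⨯₃ v) := by
    rw [fderiv_const_smul_cross_const_apply, fderiv_const_smul_cross_const_apply,
      ← cross_anticomm v u]
    module
  have hbracket : ((-c) • (x ⨯₃ u)) ⨯₃ ((-c) • (x ⨯₃ v)) = (c ^ 2 * r ^ 2) • (u ⨯₃ v) := by
    rw [smul_cross_smul, cross_cross_cross_of_dotProduct_eq_zero hu hv, hx, smul_smul]
    congr 1
    ring
  have hcoeff : -2 * c + c ^ 2 * r ^ 2 = 1 - 1 / r ^ 2 := by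
    rw [hc]
    field_simp [hr.ne']
    ring
  rw [hdω, hbracket, smul_smul, ← hcoeff]
  module
end

section
/- For the unit quaternion q(x,y,z) = z − y i + x j associated to a point (x,y,z) on the unit sphere S², one has ‖q(x,y,z)‖ = 1, and conjugation v ↦ q v q⁻¹ on purely imaginary quaternions is the rotation through angle 2·arccos(z) about the axis (−y, x, 0) (when (x,y) ≠ (0,0)). In particular, antipodal points (x,y,z) and (−x,−y,−z) give quaternions q and −q that define the same rotation. -/
open Matrix

/-- The unit quaternion `q(x,y,z) = z − y i + x j` associated to a point of
the unit sphere. -/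
def sphereQuat (x y z : ℝ) : Quaternion ℝ := ⟨z, -y, x, 0⟩

/-- The purely imaginary quaternion associated to a vector `v ∈ ℝ³`. -/
def imQuat (v : Fin 3 → ℝ) : Quaternion ℝ := ⟨0, v 0, v 1, v 2⟩

/-!
Write `q(x,y,z) = cos φ + sin φ · a` with `φ = arccos z` and `a` the unit vector along
`(−y, x, 0)`. For any quaternion `r + b` with `b` imaginary, `(r + b) v (r + b)⋆` equals
`(r² − b·b) v + 2r (b × v) + 2 (b·v) b`; for `r = cos φ`, `b = sin φ · a` the double-angle
identities turn this into Rodrigues' formula for the angle `2φ`. The other claims are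
immediate: `‖q‖² = x² + y² + z²`, and `−1` is central.
-/

open Quaternion

section imQuat

variable (v : Fin 3 → ℝ)

@[simp] theorem re_imQuat : (imQuat v).re = 0 := rfl
@[simp] theorem imI_imQuat : (imQuat v).imI = v 0 := rfl
@[simp] theorem imJ_imQuat : (imQuat v).imJ = v 1 := rfl
@[simp] theorem imK_imQuat : (imQuat v).imK = v 2 := rfl

end imQuat

theorem normSq_coe_add_imQuat (r : ℝ) (b : Fin 3 → ℝ) :
    normSq ((r : ℍ[ℝ]) + imQuat b) = r ^ 2 + b ⬝ᵥ b := by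
  simp only [normSq_def', re_add, re_coe, re_imQuat, imI_add, imI_coe, imI_imQuat, imJ_add,
    imJ_coe, imJ_imQuat, imK_add, imK_coe, imK_imQuat, dotProduct, Fin.sum_univ_three]
  ring

theorem inv_eq_star_of_normSq_eq_one {q : ℍ[ℝ]} (hq : normSq q = 1) : q⁻¹ = star q := by
  rw [Quaternion.inv_def, hq, inv_one, one_smul]

theorem coe_add_imQuat_mul_imQuat_mul_star (r : ℝ) (b v : Fin 3 → ℝ) :
    ((r : ℍ[ℝ]) + imQuat b) * imQuat v * star ((r : ℍ[ℝ]) + imQuat b) =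
      imQuat ((r ^ 2 - b ⬝ᵥ b) • v + (2 * r) • (b ⨯₃ v) + (2 * (b ⬝ᵥ v)) • b) := by
  ext <;>
  simp only [star_add, star_coe, re_mul, re_add, re_coe, re_imQuat, re_star, imI_mul, imI_add,
    imI_coe, imI_imQuat, imI_star, imJ_mul, imJ_add, imJ_coe, imJ_imQuat, imJ_star, imK_mul,
    imK_add, imK_coe, imK_imQuat, imK_star, dotProduct, Fin.sum_univ_three, cross_apply,
    Pi.add_apply, Pi.smul_apply, smul_eq_mul, cons_val_zero, cons_val_one, cons_val] <;>
  ring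

noncomputable def rodriguesRotation (a : Fin 3 → ℝ) (θ : ℝ) (v : Fin 3 → ℝ) : Fin 3 → ℝ :=
  Real.cos θ • v + Real.sin θ • (a ⨯₃ v) + ((1 - Real.cos θ) * (a ⬝ᵥ v)) • a

theorem conj_imQuat_eq_rodriguesRotation {a : Fin 3 → ℝ} (ha : a ⬝ᵥ a = 1) (φ : ℝ)
    (v : Fin 3 → ℝ) :
    let q : ℍ[ℝ] := (Real.cos φ : ℍ[ℝ]) + imQuat (Real.sin φ • a)
    q * imQuat v * q⁻¹ = imQuat (rodriguesRotation a (2 * φ) v) := by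
  intro q
  have hsa : Real.sin φ • a ⬝ᵥ Real.sin φ • a = Real.sin φ ^ 2 := by
    rw [smul_dotProduct, dotProduct_smul, ha, smul_eq_mul, smul_eq_mul]; ring
  have hq : normSq q = 1 := by
    rw [normSq_coe_add_imQuat, hsa, Real.cos_sq_add_sin_sq]
  rw [inv_eq_star_of_normSq_eq_one hq, coe_add_imQuat_mul_imQuat_mul_star, hsa,
    rodriguesRotation, Real.cos_two_mul', Real.sin_two_mul, map_smul, LinearMap.smul_apply,
    smul_dotProduct, smul_eq_mul]
  congr 1
  linear_combination (norm := module) ((a ⬝ᵥ v) * (Real.sin_sq_add_cos_sq φ)) • a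

theorem dotProduct_self_inv_sqrt_smul {n : ℕ} {u : Fin n → ℝ} {t : ℝ} (hu : u ⬝ᵥ u = t)
    (ht : 0 < t) : ((√t)⁻¹ • u) ⬝ᵥ ((√t)⁻¹ • u) = 1 := by
  rw [smul_dotProduct, dotProduct_smul, hu, smul_eq_mul, smul_eq_mul, ← mul_assoc, ← sq,
    inv_pow, Real.sq_sqrt ht.le, inv_mul_cancel₀ ht.ne']

theorem sphereQuat_eq (x y z : ℝ) : sphereQuat x y z = (z : ℍ[ℝ]) + imQuat ![-y, x, 0] := by
  ext <;> simp [sphereQuat]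

theorem norm_sphereQuat (x y z : ℝ) : ‖sphereQuat x y z‖ = √(x ^ 2 + y ^ 2 + z ^ 2) := by
  rw [norm_eq_sqrt_real_inner, inner_self, sphereQuat_eq, normSq_coe_add_imQuat]
  simp only [dotProduct, Fin.sum_univ_three, cons_val_zero, cons_val_one, cons_val]
  congr 1
  ring

theorem sphereQuat_neg (x y z : ℝ) : sphereQuat (-x) (-y) (-z) = -sphereQuat x y z := by
  ext <;> simp [sphereQuat_eq]

theorem sphereQuat_eq_cos_add_imQuat_sin {x y z : ℝ} (hsphere : x ^ 2 + y ^ 2 + z ^ 2 = 1)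
    (hxy : 0 < x ^ 2 + y ^ 2) :
    sphereQuat x y z = (Real.cos (Real.arccos z) : ℍ[ℝ]) +
      imQuat (Real.sin (Real.arccos z) • (√(x ^ 2 + y ^ 2))⁻¹ • ![-y, x, 0]) := by
  have hz : 1 - z ^ 2 = x ^ 2 + y ^ 2 := by linarith
  rw [Real.cos_arccos (by nlinarith) (by nlinarith), Real.sin_arccos, hz, smul_smul,
    mul_inv_cancel₀ (Real.sqrt_pos.mpr hxy).ne', one_smul, sphereQuat_eq]

/-- For `(x,y,z)` on the unit sphere `S²`, the quaternion
`q = q(x,y,z) = z − y i + x j` is a unit quaternion; conjugation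
`v ↦ q v q⁻¹` on purely imaginary quaternions is (by the Rodrigues rotation
formula) the rotation through angle `2·arccos z` about the axis `(−y, x, 0)`
(when `(x,y) ≠ (0,0)`); and antipodal points give quaternions `q` and `−q`
which define the same rotation. -/
theorem sphereQuat_holonomy (x y z : ℝ) (hsphere : x ^ 2 + y ^ 2 + z ^ 2 = 1) :
    ‖sphereQuat x y z‖ = 1 ∧
    (¬(x = 0 ∧ y = 0) →
      ∀ v : Fin 3 → ℝ,
        let q : Quaternion ℝ := sphereQuat x y z
        let a : Fin 3 → ℝ := (Real.sqrt (x ^ 2 + y ^ 2))⁻¹ • ![-y, x, 0]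
        let θ : ℝ := 2 * Real.arccos z
        let w : Fin 3 → ℝ :=
          Real.cos θ • v + Real.sin θ • (a ⨯₃ v) + ((1 - Real.cos θ) * (a ⬝ᵥ v)) • a
        q * imQuat v * q⁻¹ = imQuat w) ∧
    sphereQuat (-x) (-y) (-z) = -sphereQuat x y z ∧
    (∀ p : Quaternion ℝ,
      (-sphereQuat x y z) * p * (-sphereQuat x y z)⁻¹ =
        sphereQuat x y z * p * (sphereQuat x y z)⁻¹) := by
  refine ⟨by rw [norm_sphereQuat, hsphere, Real.sqrt_one], fun hxy v => ?_, sphereQuat_neg x y z,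
    fun p => by rw [inv_neg, neg_mul, neg_mul, mul_neg, neg_neg]⟩
  have hpos : 0 < x ^ 2 + y ^ 2 := by
    rcases not_and_or.mp hxy with h | h <;> positivity
  have ha : ((√(x ^ 2 + y ^ 2))⁻¹ • ![-y, x, 0]) ⬝ᵥ ((√(x ^ 2 + y ^ 2))⁻¹ • ![-y, x, 0]) = 1 :=
    dotProduct_self_inv_sqrt_smul (by
      simp only [dotProduct, Fin.sum_univ_three, cons_val_zero, cons_val_one, cons_val]; ring) hpos
  show _ = imQuat (rodriguesRotation _ _ v)
  rw [sphereQuat_eq_cos_add_imQuat_sin hsphere hpos]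
  exact conj_imQuat_eq_rodriguesRotation ha _ v
end
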